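/- For the Maslov function M(x) = J(x − O, x − O) + 1 defined via the planar pairing J, and for the function M_X defined with X in place of O, the Alexander function A(x) = (1/2)(M(x) − M_X(x)) − (n−1)/2 takes integer values shifted by a fixed constant; more precisely, for any two grid states x and y of an n×n grid diagram, the difference A(x) − A(y) = (1/2)((M(x) − M(y)) − (M_X(x) − M_X(y))) is an integer. -/
import Mathlib


/-- `I(P,Q)`: the number of pairs `p ∈ P`, `q ∈ Q` with `p` strictly southwest of `q`. -/
noncomputable def Icount (P Q : Finset (ℝ × ℝ)) : ℕ :=
  Nat.card {pq : (ℝ × ℝ) × (ℝ × ℝ) //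
    pq.1 ∈ P ∧ pq.2 ∈ Q ∧ pq.1.1 < pq.2.1 ∧ pq.1.2 < pq.2.2}

/-- `J(P,Q) = (I(P,Q) + I(Q,P))/2`. -/
noncomputable def Jpair (P Q : Finset (ℝ × ℝ)) : ℚ :=
  ((Icount P Q : ℚ) + (Icount Q P : ℚ)) / 2

/-- The lattice points of a grid state: one in each row and column, encoded by a
permutation. -/
noncomputable def statePts {n : ℕ} (τ : Equiv.Perm (Fin n)) : Finset (ℝ × ℝ) :=
  Finset.univ.image fun i : Fin n => ((i.val : ℝ), ((τ i).val : ℝ))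

/-- The points of a marking set (`O` or `X`): one in each row and column, placed at
square centers, encoded by a permutation. -/
noncomputable def markPts {n : ℕ} (σ : Equiv.Perm (Fin n)) : Finset (ℝ × ℝ) :=
  Finset.univ.image fun i : Fin n => ((i.val : ℝ) + 1 / 2, ((σ i).val : ℝ) + 1 / 2)

/-- The Maslov function `M(x) = J(x - O, x - O) + 1`, expanded bilinearly. -/
noncomputable def MaslovFun {n : ℕ} (τ σO : Equiv.Perm (Fin n)) : ℚ :=
  Jpair (statePts τ) (statePts τ) - Jpair (statePts τ) (markPts σO) -
    Jpair (markPts σO) (statePts τ) + Jpair (markPts σO) (markPts σO) + 1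

/-- The Alexander function `A(x) = (1/2)(M(x) - M_X(x)) - (n-1)/2`. -/
noncomputable def AlexFun {n : ℕ} (τ σO σX : Equiv.Perm (Fin n)) : ℚ :=
  (MaslovFun τ σO - MaslovFun τ σX) / 2 - ((n : ℚ) - 1) / 2

section Aux

open Finset

lemma Icount_image {n : ℕ} {f g : Fin n → ℝ × ℝ} (hf : Function.Injective f)
    (hg : Function.Injective g) :
    Icount (Finset.univ.image f) (Finset.univ.image g) =
      (Finset.univ.filter fun p : Fin n × Fin n =>
        (f p.1).1 < (g p.2).1 ∧ (f p.1).2 < (g p.2).2).card := by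
  classical
  unfold Icount
  have e : {p : Fin n × Fin n // (f p.1).1 < (g p.2).1 ∧ (f p.1).2 < (g p.2).2} ≃
      {pq : (ℝ × ℝ) × (ℝ × ℝ) // pq.1 ∈ Finset.univ.image f ∧ pq.2 ∈ Finset.univ.image g ∧
        pq.1.1 < pq.2.1 ∧ pq.1.2 < pq.2.2} := by
    refine Equiv.ofBijective
      (fun x => ⟨(f x.1.1, g x.1.2),
        Finset.mem_image_of_mem f (Finset.mem_univ _),
        Finset.mem_image_of_mem g (Finset.mem_univ _), x.2.1, x.2.2⟩) ⟨?_, ?_⟩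
    · rintro ⟨⟨a1, a2⟩, ha⟩ ⟨⟨b1, b2⟩, hb⟩ h
      simp only [Subtype.mk.injEq, Prod.mk.injEq] at h
      have h1 := hf h.1
      have h2 := hg h.2
      simp [h1, h2]
    · rintro ⟨⟨p, q⟩, hp, hq, h1, h2⟩
      obtain ⟨i, -, hi⟩ := Finset.mem_image.mp hp
      obtain ⟨j, -, hj⟩ := Finset.mem_image.mp hq
      refine ⟨⟨(i, j), ?_⟩, ?_⟩
      · rw [hi, hj]; exact ⟨h1, h2⟩
      · simp [hi, hj]
  rw [Nat.card_congr e.symm, Nat.card_eq_fintype_card, Fintype.card_subtype]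

lemma cast_lt_half {a b : ℕ} : (a : ℝ) < (b : ℝ) + 1 / 2 ↔ a ≤ b := by
  constructor
  · intro h
    by_contra hc
    push_neg at hc
    have : (b : ℝ) + 1 ≤ a := by exact_mod_cast hc
    linarith
  · intro h
    have : (a : ℝ) ≤ b := by exact_mod_cast h
    linarith

lemma half_lt_cast {a b : ℕ} : (a : ℝ) + 1 / 2 < b ↔ a < b := by
  constructor
  · intro h
    have : (a : ℝ) < b := by linarith
    exact_mod_cast this
  · intro h
    have h1 : (a : ℝ) + 1 ≤ b := by exact_mod_cast h
    linarith

lemma state_inj {n : ℕ} (τ : Equiv.Perm (Fin n)) :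
    Function.Injective fun i : Fin n => ((i.val : ℝ), ((τ i).val : ℝ)) := by
  intro a b h
  simp only [Prod.mk.injEq] at h
  exact Fin.ext (by exact_mod_cast h.1)

lemma mark_inj {n : ℕ} (σ : Equiv.Perm (Fin n)) :
    Function.Injective fun i : Fin n => ((i.val : ℝ) + 1 / 2, ((σ i).val : ℝ) + 1 / 2) := by
  intro a b h
  simp only [Prod.mk.injEq] at h
  have h1 : (a.val : ℝ) = b.val := by linarith [h.1]
  exact Fin.ext (by exact_mod_cast h1)

lemma Icount_sm {n : ℕ} (τ σ : Equiv.Perm (Fin n)) :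
    Icount (statePts τ) (markPts σ) =
      (Finset.univ.filter fun p : Fin n × Fin n => p.1 ≤ p.2 ∧ τ p.1 ≤ σ p.2).card := by
  classical
  rw [statePts, markPts, Icount_image (state_inj τ) (mark_inj σ)]
  refine congrArg Finset.card (Finset.filter_congr fun p _ => ?_)
  simp only [cast_lt_half]
  rw [Fin.le_def, Fin.le_def]

lemma Icount_ms {n : ℕ} (τ σ : Equiv.Perm (Fin n)) :
    Icount (markPts σ) (statePts τ) =
      (Finset.univ.filter fun p : Fin n × Fin n => p.1 < p.2 ∧ σ p.1 < τ p.2).card := by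
  classical
  rw [statePts, markPts, Icount_image (mark_inj σ) (state_inj τ)]
  refine congrArg Finset.card (Finset.filter_congr fun p _ => ?_)
  simp only [half_lt_cast]
  rw [Fin.lt_def, Fin.lt_def]

/-- Key parity lemma: `I(x, O) + I(O, x) = n + 2m` for some integer `m`. -/
lemma key_parity {n : ℕ} (τ σ : Equiv.Perm (Fin n)) :
    ∃ m : ℤ, (Icount (statePts τ) (markPts σ) : ℚ) + (Icount (markPts σ) (statePts τ) : ℚ)
      = (n : ℚ) + 2 * (m : ℚ) := by
  classical
  rw [Icount_sm, Icount_ms, Finset.card_filter, Finset.card_filter]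
  set A := ∑ p : Fin n × Fin n, if p.1 ≤ p.2 ∧ τ p.1 ≤ σ p.2 then 1 else 0 with hA
  set B := ∑ p : Fin n × Fin n, if p.1 < p.2 ∧ σ p.1 < τ p.2 then 1 else 0 with hB
  set C := ∑ p : Fin n × Fin n, if p.1 < p.2 ∧ σ p.2 < τ p.1 then 1 else 0 with hC
  set C' := ∑ p : Fin n × Fin n, if p.2 < p.1 ∧ σ p.1 < τ p.2 then 1 else 0 with hC'
  set E := ∑ p : Fin n × Fin n, if p.1 = p.2 ∧ σ p.2 < τ p.1 then 1 else 0 with hE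
  set L := ∑ p : Fin n × Fin n, if p.1 < p.2 then 1 else 0 with hL
  set D := ∑ p : Fin n × Fin n, if p.1 = p.2 then 1 else 0 with hD
  set S := ∑ p : Fin n × Fin n, if σ p.1 < τ p.2 then 1 else 0 with hS
  have e1 : A + C + E = L + D := by
    rw [hA, hC, hE, hL, hD, ← Finset.sum_add_distrib, ← Finset.sum_add_distrib,
      ← Finset.sum_add_distrib]
    refine Finset.sum_congr rfl fun p _ => ?_
    obtain ⟨i, j⟩ := p
    rcases lt_trichotomy i j with h | h | h
    · have h1 : i ≤ j := le_of_lt h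
      have h2 : i ≠ j := ne_of_lt h
      rcases lt_or_ge (σ j) (τ i) with h3 | h3
      · simp [h, h1, h2, h3, not_le.mpr h3]
      · simp [h, h1, h2, h3, not_lt.mpr h3]
    · subst h
      have h1 : ¬ i < i := lt_irrefl i
      rcases lt_or_ge (σ i) (τ i) with h3 | h3
      · simp [h1, h3, not_le.mpr h3]
      · simp [h1, h3, not_lt.mpr h3]
    · have h1 : ¬ i < j := not_lt.mpr (le_of_lt h)
      have h2 : ¬ i ≤ j := not_le.mpr h
      have h3 : i ≠ j := (ne_of_lt h).symm
      simp [h1, h2, h3]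
  have e2 : S = B + C' + E := by
    rw [hS, hB, hC', hE, ← Finset.sum_add_distrib, ← Finset.sum_add_distrib]
    refine Finset.sum_congr rfl fun p _ => ?_
    obtain ⟨i, j⟩ := p
    rcases lt_trichotomy i j with h | h | h
    · have h2 : ¬ j < i := asymm h
      have h3 : i ≠ j := ne_of_lt h
      rcases lt_or_ge (σ i) (τ j) with h4 | h4
      · simp [h, h2, h3, h4]
      · simp [h, h2, h3, not_lt.mpr h4]
    · subst h
      simp [lt_irrefl]
    · have h1 : ¬ i < j := not_lt.mpr (le_of_lt h)
      have h3 : i ≠ j := (ne_of_lt h).symm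
      rcases lt_or_ge (σ i) (τ j) with h4 | h4
      · simp [h, h1, h3, h4]
      · simp [h, h1, h3, not_lt.mpr h4]
  have e3 : S = L := by
    rw [hS, hL]
    exact Fintype.sum_equiv (Equiv.prodCongr σ τ) _ _ (fun p => rfl)
  have e4 : C' = C := by
    rw [hC', hC]
    exact Fintype.sum_equiv (Equiv.prodComm (Fin n) (Fin n)) _ _ (fun p => rfl)
  have e5 : D = n := by
    rw [hD, Fintype.sum_prod_type]
    simp
  have hnat : A + B + 2 * C + 2 * E = 2 * L + n := by omega
  refine ⟨(L : ℤ) - C - E, ?_⟩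
  have hq := congrArg (Nat.cast : ℕ → ℚ) hnat
  push_cast at hq ⊢
  linarith

lemma maslov_eq {n : ℕ} (τ σ : Equiv.Perm (Fin n)) :
    MaslovFun τ σ = (Icount (statePts τ) (statePts τ) : ℚ) +
      (Icount (markPts σ) (markPts σ) : ℚ) + 1 -
      ((Icount (statePts τ) (markPts σ) : ℚ) + (Icount (markPts σ) (statePts τ) : ℚ)) := by
  unfold MaslovFun Jpair
  ring

end Aux

/-- For any two grid states `x`, `y` of an `n × n` grid diagram, the difference of
Alexander function values `A(x) - A(y) = (1/2)((M(x) - M(y)) - (M_X(x) - M_X(y)))`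
is an integer. -/
theorem alexander_difference_is_integer (n : ℕ)
    (σO σX τ τ' : Equiv.Perm (Fin n)) :
    ∃ k : ℤ, AlexFun τ σO σX - AlexFun τ' σO σX = (k : ℚ) := by
  obtain ⟨m1, hm1⟩ := key_parity τ σO
  obtain ⟨m2, hm2⟩ := key_parity τ σX
  obtain ⟨m3, hm3⟩ := key_parity τ' σO
  obtain ⟨m4, hm4⟩ := key_parity τ' σX
  refine ⟨-m1 + m2 + m3 - m4, ?_⟩
  unfold AlexFun
  rw [maslov_eq τ σO, maslov_eq τ σX, maslov_eq τ' σO, maslov_eq τ' σX]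
  push_cast
  linarith [hm1, hm2, hm3, hm4]
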